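/- arXiv:2301.01611 — 4 statements merged into one kernel-verified Lean document; each statement's English description precedes it below -/
import Mathlib

section
/- Let U ⊆ ℂ be a nonempty connected open set and let f : ℂ → ℂ be holomorphic on U with f'(z) ≠ 0 for all z ∈ U. If the Schwarzian derivative S(f)(z) = 0 for every z ∈ U, then f is the restriction to U of a Möbius transformation: there exist a, b, c, d ∈ ℂ with a·d − b·c ≠ 0 such that c·z + d ≠ 0 and f(z) = (a·z + b)/(c·z + d) for all z ∈ U. -/
/-!
Where `f' ≠ 0`, the logarithmic derivative `g = f''/f'` of `f'` satisfies `g' = S(f) + g²/2`,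
so `S(f) = 0` makes `g` a solution of the Riccati equation `y' = y²/2`. The Möbius map `M` with
the same value, derivative and `g` as `f` at `z₀` has `M''/M' = -2c/(cz+d)`, another solution with
the same initial value. Two solutions of such an equation differ by a solution `h` of a linear
equation `h' = q h`, and an analytic solution of a linear equation vanishing at a point vanishes
identically near it, since differentiation lowers its order of vanishing while multiplication by
`q` does not. Hence `f''/f' = M''/M'`, then `f' = M'` and `f = M` near `z₀`, and the identity
theorem, applied to `f (cz+d) - (az+b)`, extends this to all of `U`.
-/

/-- The Schwarzian derivative of `f` at `z`:
`S(f)(z) = f'''(z)/f'(z) - (3/2) * (f''(z)/f'(z))^2`. -/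
noncomputable def schwarzian (f : ℂ → ℂ) (z : ℂ) : ℂ :=
  iteratedDeriv 3 f z / deriv f z - (3 / 2) * (iteratedDeriv 2 f z / deriv f z) ^ 2

open Filter Topology

theorem analyticAt_of_eventually_hasDerivAt {f f' : ℂ → ℂ} {z₀ : ℂ}
    (hf : ∀ᶠ z in 𝓝 z₀, HasDerivAt f (f' z) z) : AnalyticAt ℂ f z₀ :=
  Complex.analyticAt_iff_eventually_differentiableAt.2 (hf.mono fun _ hz => hz.differentiableAt)

theorem eventuallyEq_zero_of_hasDerivAt_mul {h q : ℂ → ℂ} {z₀ : ℂ} (hq : AnalyticAt ℂ q z₀)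
    (hh : ∀ᶠ z in 𝓝 z₀, HasDerivAt h (q z * h z) z) (h₀ : h z₀ = 0) : h =ᶠ[𝓝 z₀] 0 := by
  have ha : AnalyticAt ℂ h z₀ := analyticAt_of_eventually_hasDerivAt hh
  have hd : deriv h =ᶠ[𝓝 z₀] q * h := hh.mono fun z hz => hz.deriv
  have hord : analyticOrderAt (deriv h) z₀ + 1 = analyticOrderAt h z₀ := by
    simpa [h₀] using ha.analyticOrderAt_deriv_add_one
  rw [analyticOrderAt_congr hd, analyticOrderAt_mul hq ha] at hord
  refine analyticOrderAt_eq_top.1 (by_contra fun hn => ?_)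
  have hle : analyticOrderAt h z₀ + 1 ≤ analyticOrderAt h z₀ :=
    calc _ ≤ analyticOrderAt q z₀ + analyticOrderAt h z₀ + 1 := by gcongr; exact le_add_self
      _ = _ := hord
  exact ((ENat.add_one_le_iff hn).1 hle).false

theorem eventuallyEq_of_hasDerivAt_mul {u v q : ℂ → ℂ} {z₀ : ℂ} (hq : AnalyticAt ℂ q z₀)
    (hu : ∀ᶠ z in 𝓝 z₀, HasDerivAt u (q z * u z) z)
    (hv : ∀ᶠ z in 𝓝 z₀, HasDerivAt v (q z * v z) z) (h₀ : u z₀ = v z₀) : u =ᶠ[𝓝 z₀] v := by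
  refine (eventuallyEq_zero_of_hasDerivAt_mul (h := fun z => u z - v z) hq ?_
    (sub_eq_zero.2 h₀)).mono fun z hz => sub_eq_zero.1 hz
  filter_upwards [hu, hv] with z hu hv
  exact (hu.sub hv).congr_deriv (by ring)

theorem eventuallyEq_of_hasDerivAt_sq_div_two {u v : ℂ → ℂ} {z₀ : ℂ}
    (hu : ∀ᶠ z in 𝓝 z₀, HasDerivAt u (u z ^ 2 / 2) z)
    (hv : ∀ᶠ z in 𝓝 z₀, HasDerivAt v (v z ^ 2 / 2) z) (h₀ : u z₀ = v z₀) : u =ᶠ[𝓝 z₀] v := by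
  have hq : AnalyticAt ℂ (fun z => (u z + v z) / 2) z₀ :=
    ((analyticAt_of_eventually_hasDerivAt hu).add
      (analyticAt_of_eventually_hasDerivAt hv)).div_const
  refine (eventuallyEq_zero_of_hasDerivAt_mul (h := fun z => u z - v z) hq ?_
    (sub_eq_zero.2 h₀)).mono fun z hz => sub_eq_zero.1 hz
  filter_upwards [hu, hv] with z hu hv
  exact (hu.sub hv).congr_deriv (by ring)

theorem hasDerivAt_logDeriv_deriv {f : ℂ → ℂ} {z : ℂ} (hf : AnalyticAt ℂ f z)
    (hf' : deriv f z ≠ 0) :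
    HasDerivAt (logDeriv (deriv f)) (schwarzian f z + logDeriv (deriv f) z ^ 2 / 2) z := by
  have h₂ : HasDerivAt (deriv (deriv f)) (deriv (deriv (deriv f)) z) z :=
    hf.deriv.deriv.differentiableAt.hasDerivAt
  have h₁ : HasDerivAt (deriv f) (deriv (deriv f) z) z := hf.deriv.differentiableAt.hasDerivAt
  refine (h₂.div h₁ hf').congr_deriv ?_
  simp only [schwarzian, logDeriv_apply, iteratedDeriv_succ, iteratedDeriv_zero]
  field_simp
  ring

section Moebius

variable {𝕜 : Type*} [NontriviallyNormedField 𝕜]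

theorem hasDerivAt_moebius {a b c d z : 𝕜} (hz : c * z + d ≠ 0) :
    HasDerivAt (fun w => (a * w + b) / (c * w + d)) ((a * d - b * c) / (c * z + d) ^ 2) z := by
  have hl : ∀ e f : 𝕜, HasDerivAt (fun w => e * w + f) e z := fun e f => by
    simpa using ((hasDerivAt_id z).const_mul e).add_const f
  refine ((hl a b).fun_div (hl c d) hz).congr_deriv ?_
  ring

theorem hasDerivAt_const_div_affine_pow {c d e z : 𝕜} (n : ℕ) (hz : c * z + d ≠ 0) :
    HasDerivAt (fun w => e / (c * w + d) ^ n)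
      (-n * c / (c * z + d) * (e / (c * z + d) ^ n)) z := by
  have hl : HasDerivAt (fun w => c * w + d) c z := by
    simpa using ((hasDerivAt_id z).const_mul c).add_const d
  refine ((hasDerivAt_const z e).fun_div (hl.fun_pow n) (pow_ne_zero n hz)).congr_deriv ?_
  cases n with
  | zero => simp
  | succ n =>
    simp only [Nat.add_sub_cancel]
    field_simp
    ring

end Moebius

/-- For these coefficients `M z = (a z + b) / (c z + d)` has `M z₀ = w₀`, `M' z₀ = w₁` and
`M'' z₀ / M' z₀ = γ`. -/
theorem exists_moebius_coeffs {K : Type*} [Field K] [CharZero K] (z₀ w₀ w₁ γ : K) :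
    ∃ a b c d : K, c * z₀ + d = 1 ∧ a * d - b * c = w₁ ∧ a * z₀ + b = w₀ ∧ -2 * c = γ :=
  ⟨w₀ * (-γ / 2) + w₁, w₀ * (1 + γ / 2 * z₀) - w₁ * z₀, -γ / 2, 1 + γ / 2 * z₀,
    by ring, by ring, by ring, by ring⟩

theorem eventuallyEq_moebius_of_schwarzian_eq_zero {f : ℂ → ℂ} {z₀ : ℂ} (hf : AnalyticAt ℂ f z₀)
    (hf' : deriv f z₀ ≠ 0) (hS : ∀ᶠ z in 𝓝 z₀, schwarzian f z = 0) :
    ∃ a b c d : ℂ, a * d - b * c ≠ 0 ∧ c * z₀ + d ≠ 0 ∧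
      f =ᶠ[𝓝 z₀] fun z => (a * z + b) / (c * z + d) := by
  obtain ⟨a, b, c, d, hz₀, hdet, hfz₀, hgz₀⟩ :=
    exists_moebius_coeffs z₀ (f z₀) (deriv f z₀) (logDeriv (deriv f) z₀)
  have hcz₀ : c * z₀ + d ≠ 0 := by simp [hz₀]
  have hnear : ∀ᶠ z in 𝓝 z₀,
      AnalyticAt ℂ f z ∧ deriv f z ≠ 0 ∧ c * z + d ≠ 0 ∧ schwarzian f z = 0 := by
    have hc : ContinuousAt (fun z => c * z + d) z₀ := by fun_prop
    filter_upwards [hf.eventually_analyticAt, hf.deriv.continuousAt.eventually_ne hf',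
      hc.eventually_ne hcz₀, hS] with z h₁ h₂ h₃ h₄
    exact ⟨h₁, h₂, h₃, h₄⟩
  have hg : logDeriv (deriv f) =ᶠ[𝓝 z₀] fun z => -2 * c / (c * z + d) := by
    refine eventuallyEq_of_hasDerivAt_sq_div_two ?_ ?_ (by simp [hz₀, hgz₀])
    · filter_upwards [hnear] with z ⟨hfz, hf'z, _, hSz⟩
      simpa [hSz] using hasDerivAt_logDeriv_deriv hfz hf'z
    · filter_upwards [hnear] with z ⟨_, _, hcz, _⟩
      have hG := hasDerivAt_const_div_affine_pow (e := -2 * c) 1 hcz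
      simp only [pow_one] at hG
      exact hG.congr_deriv (by push_cast; ring)
  have hf'M : deriv f =ᶠ[𝓝 z₀] fun z => (a * d - b * c) / (c * z + d) ^ 2 := by
    refine eventuallyEq_of_hasDerivAt_mul (q := fun z => -2 * c / (c * z + d))
      (analyticAt_const.div (by fun_prop) hcz₀) ?_ ?_ (by simp [hz₀, hdet])
    · filter_upwards [hnear, hg] with z ⟨hfz, hf'z, _, _⟩ hgz
      refine hfz.deriv.differentiableAt.hasDerivAt.congr_deriv ?_
      rw [← hgz, logDeriv_apply]
      field_simp
    · filter_upwards [hnear] with z ⟨_, _, hcz, _⟩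
      exact (hasDerivAt_const_div_affine_pow 2 hcz).congr_deriv (by push_cast; ring)
  refine ⟨a, b, c, d, hdet ▸ hf', hcz₀, ?_⟩
  refine (eventuallyEq_zero_of_hasDerivAt_mul (h := fun z => f z - (a * z + b) / (c * z + d))
    (q := 0) analyticAt_const ?_ (by simp [hz₀, hfz₀])).mono fun z hz => sub_eq_zero.1 hz
  filter_upwards [hnear, hf'M] with z ⟨hfz, _, hcz, _⟩ hf'z
  refine (hfz.differentiableAt.hasDerivAt.sub (hasDerivAt_moebius hcz)).congr_deriv ?_
  simp [hf'z]

theorem eqOn_moebius_of_eventuallyEq {U : Set ℂ} {f : ℂ → ℂ} {z₀ a b c d : ℂ}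
    (hf : AnalyticOnNhd ℂ f U) (hU : IsPreconnected U) (hz₀ : z₀ ∈ U) (hdet : a * d - b * c ≠ 0)
    (hcz₀ : c * z₀ + d ≠ 0) (hfz₀ : f =ᶠ[𝓝 z₀] fun z => (a * z + b) / (c * z + d)) :
    ∀ z ∈ U, c * z + d ≠ 0 ∧ f z = (a * z + b) / (c * z + d) := by
  have hF : Set.EqOn (fun z => f z * (c * z + d) - (a * z + b)) 0 U := by
    refine AnalyticOnNhd.eqOn_zero_of_preconnected_of_eventuallyEq_zero
      (fun z hz => by have := hf z hz; fun_prop) hU hz₀ ?_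
    have hc : Continuous fun z => c * z + d := by fun_prop
    filter_upwards [hfz₀, hc.continuousAt.eventually_ne hcz₀] with z hz hcz
    simp [hz, div_mul_cancel₀ _ hcz]
  intro z hz
  have hFz : f z * (c * z + d) = a * z + b := sub_eq_zero.1 (hF hz)
  have hcz : c * z + d ≠ 0 := by
    intro h₀
    have h₁ : a * z + b = 0 := by rw [← hFz, h₀, mul_zero]
    exact hdet (by linear_combination a * h₀ - c * h₁)
  exact ⟨hcz, by rw [eq_div_iff hcz, hFz]⟩

/-- A holomorphic function with nonvanishing derivative and identically vanishing
Schwarzian derivative on a nonempty connected open set is the restriction of a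
Möbius transformation. -/
theorem moebius_of_schwarzian_eq_zero (U : Set ℂ) (hU : IsOpen U)
    (hUc : IsConnected U) (hUne : U.Nonempty)
    (f : ℂ → ℂ) (hf : DifferentiableOn ℂ f U) (hf' : ∀ z ∈ U, deriv f z ≠ 0)
    (hS : ∀ z ∈ U, schwarzian f z = 0) :
    ∃ a b c d : ℂ, a * d - b * c ≠ 0 ∧
      ∀ z ∈ U, c * z + d ≠ 0 ∧ f z = (a * z + b) / (c * z + d) := by
  obtain ⟨z₀, hz₀⟩ := hUne
  have hA : AnalyticOnNhd ℂ f U := hf.analyticOnNhd hU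
  obtain ⟨a, b, c, d, hdet, hcz₀, hloc⟩ := eventuallyEq_moebius_of_schwarzian_eq_zero (hA z₀ hz₀)
    (hf' z₀ hz₀) (eventually_of_mem (hU.mem_nhds hz₀) hS)
  exact ⟨a, b, c, d, hdet, eqOn_moebius_of_eventuallyEq hA hUc.isPreconnected hz₀ hdet hcz₀ hloc⟩
end

section
/- Let U ⊆ ℂ be open, let p : ℂ → ℂ be holomorphic on U, and let y₁, y₂ : ℂ → ℂ be holomorphic on U satisfying y₁'' + p·y₁ = 0 and y₂'' + p·y₂ = 0 on U. Assume y₂(z) ≠ 0 for all z ∈ U and that the Wronskian y₁'(z)·y₂(z) − y₁(z)·y₂'(z) is nonzero for all z ∈ U. Then the quotient f = y₁/y₂ satisfies S(f)(z) = 2·p(z) for every z ∈ U. -/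
/-!
Write `f = y₁ / y₂`. Then `f' = W / y₂²` with `W` the Wronskian, and `W' = 0` because both
solutions satisfy the same equation. Hence the pre-Schwarzian is `f'' / f' = -2 y₂' / y₂`, and from
`S(f) = (f'' / f')' - ½ (f'' / f')²` one gets `S(f) = -2 y₂'' / y₂ = 2 p`.
-/

open Filter Topology

lemma iteratedDeriv_two_eq_deriv_deriv (f : ℂ → ℂ) : iteratedDeriv 2 f = deriv (deriv f) := by
  rw [iteratedDeriv_succ, iteratedDeriv_one]

noncomputable def preSchwarzian (f : ℂ → ℂ) (z : ℂ) : ℂ :=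
  deriv (deriv f) z / deriv f z

noncomputable def wronskian (y₁ y₂ : ℂ → ℂ) (z : ℂ) : ℂ :=
  deriv y₁ z * y₂ z - y₁ z * deriv y₂ z

lemma schwarzian_eq_deriv_preSchwarzian_sub {f : ℂ → ℂ} {z : ℂ}
    (hf₁ : DifferentiableAt ℂ (deriv f) z) (hf₂ : DifferentiableAt ℂ (deriv (deriv f)) z)
    (hf₀ : deriv f z ≠ 0) :
    schwarzian f z = deriv (preSchwarzian f) z - 1 / 2 * preSchwarzian f z ^ 2 := by
  have h₃ : iteratedDeriv 3 f = deriv (deriv (deriv f)) := by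
    rw [iteratedDeriv_succ, iteratedDeriv_two_eq_deriv_deriv]
  have hpre : preSchwarzian f = fun w => deriv (deriv f) w / deriv f w := rfl
  rw [schwarzian, hpre, h₃, iteratedDeriv_two_eq_deriv_deriv, deriv_fun_div hf₂ hf₁ hf₀]
  field_simp
  ring

lemma schwarzian_eq_of_preSchwarzian_eventuallyEq {f y : ℂ → ℂ} {z : ℂ}
    (hf₁ : DifferentiableAt ℂ (deriv f) z) (hf₂ : DifferentiableAt ℂ (deriv (deriv f)) z)
    (hf₀ : deriv f z ≠ 0) (hy : DifferentiableAt ℂ y z) (hy₁ : DifferentiableAt ℂ (deriv y) z)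
    (hy₀ : y z ≠ 0) (h : preSchwarzian f =ᶠ[𝓝 z] fun w => -2 * deriv y w / y w) :
    schwarzian f z = -2 * deriv (deriv y) z / y z := by
  have hderiv : deriv (preSchwarzian f) z
      = -2 * (deriv (deriv y) z * y z - deriv y z * deriv y z) / y z ^ 2 := by
    rw [h.deriv_eq, deriv_fun_div (hy₁.const_mul _) hy hy₀, deriv_const_mul _ hy₁]
    ring
  rw [schwarzian_eq_deriv_preSchwarzian_sub hf₁ hf₂ hf₀, hderiv, h.eq_of_nhds]
  field_simp
  ring

lemma deriv_wronskian {y₁ y₂ : ℂ → ℂ} {z : ℂ}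
    (hy₁ : DifferentiableAt ℂ y₁ z) (hy₂ : DifferentiableAt ℂ y₂ z)
    (hy₁' : DifferentiableAt ℂ (deriv y₁) z) (hy₂' : DifferentiableAt ℂ (deriv y₂) z) :
    deriv (wronskian y₁ y₂) z
      = deriv (deriv y₁) z * y₂ z - y₁ z * deriv (deriv y₂) z := by
  have hd : HasDerivAt (wronskian y₁ y₂) _ z :=
    (hy₁'.hasDerivAt.mul hy₂.hasDerivAt).sub (hy₁.hasDerivAt.mul hy₂'.hasDerivAt)
  rw [hd.deriv]
  ring

lemma deriv_div_sq_of_deriv_eq_zero {W y : ℂ → ℂ} {z : ℂ}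
    (hW : DifferentiableAt ℂ W z) (hW' : deriv W z = 0) (hy : DifferentiableAt ℂ y z)
    (hy₀ : y z ≠ 0) :
    deriv (fun w => W w / y w ^ 2) z = -2 * W z * deriv y z / y z ^ 3 := by
  rw [deriv_fun_div hW (hy.fun_pow 2) (pow_ne_zero 2 hy₀), deriv_fun_pow hy, hW']
  field_simp
  ring

lemma deriv_div_eq_wronskian_div_sq {y₁ y₂ : ℂ → ℂ} {z : ℂ}
    (hy₁ : DifferentiableAt ℂ y₁ z) (hy₂ : DifferentiableAt ℂ y₂ z) (hy₂₀ : y₂ z ≠ 0) :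
    deriv (fun w => y₁ w / y₂ w) z = wronskian y₁ y₂ z / y₂ z ^ 2 :=
  deriv_fun_div hy₁ hy₂ hy₂₀

lemma preSchwarzian_div_of_solutions {U : Set ℂ} (hU : IsOpen U) {p y₁ y₂ : ℂ → ℂ}
    (hy₁ : AnalyticOnNhd ℂ y₁ U) (hy₂ : AnalyticOnNhd ℂ y₂ U) (hy₂ne : ∀ z ∈ U, y₂ z ≠ 0)
    {z : ℂ} (hz : z ∈ U) (hode₁ : deriv (deriv y₁) z + p z * y₁ z = 0)
    (hode₂ : deriv (deriv y₂) z + p z * y₂ z = 0) (hW : wronskian y₁ y₂ z ≠ 0) :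
    preSchwarzian (fun w => y₁ w / y₂ w) z = -2 * deriv y₂ z / y₂ z := by
  have hd₁ := (hy₁ z hz).differentiableAt
  have hd₂ := (hy₂ z hz).differentiableAt
  have hd₁' := (hy₁.deriv z hz).differentiableAt
  have hd₂' := (hy₂.deriv z hz).differentiableAt
  have hderiv : deriv (fun w => y₁ w / y₂ w) =ᶠ[𝓝 z] fun w => wronskian y₁ y₂ w / y₂ w ^ 2 := by
    filter_upwards [hU.mem_nhds hz] with w hw
    exact deriv_div_eq_wronskian_div_sq (hy₁ w hw).differentiableAt (hy₂ w hw).differentiableAt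
      (hy₂ne w hw)
  have hW' : deriv (wronskian y₁ y₂) z = 0 := by
    rw [deriv_wronskian hd₁ hd₂ hd₁' hd₂']
    linear_combination y₂ z * hode₁ - y₁ z * hode₂
  have hdW : DifferentiableAt ℂ (wronskian y₁ y₂) z := (hd₁'.mul hd₂).sub (hd₁.mul hd₂')
  rw [preSchwarzian, hderiv.deriv_eq, hderiv.eq_of_nhds,
    deriv_div_sq_of_deriv_eq_zero hdW hW' hd₂ (hy₂ne z hz)]
  field_simp [hy₂ne z hz]

theorem schwarzian_quotient_of_solutions_general (U : Set ℂ) (hU : IsOpen U)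
    (p y₁ y₂ : ℂ → ℂ)
    (hy₁ : DifferentiableOn ℂ y₁ U) (hy₂ : DifferentiableOn ℂ y₂ U)
    (hode₁ : ∀ z ∈ U, iteratedDeriv 2 y₁ z + p z * y₁ z = 0)
    (hode₂ : ∀ z ∈ U, iteratedDeriv 2 y₂ z + p z * y₂ z = 0)
    (hy₂ne : ∀ z ∈ U, y₂ z ≠ 0)
    (hW : ∀ z ∈ U, deriv y₁ z * y₂ z - y₁ z * deriv y₂ z ≠ 0)
    (f : ℂ → ℂ) (hf : f = fun z => y₁ z / y₂ z) :
    ∀ z ∈ U, schwarzian f z = 2 * p z := by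
  intro z hz
  subst hf
  rw [iteratedDeriv_two_eq_deriv_deriv] at hode₁ hode₂
  have ha₁ := hy₁.analyticOnNhd hU
  have ha₂ := hy₂.analyticOnNhd hU
  have haf := ha₁.div ha₂ hy₂ne
  have hf₀ : deriv (fun w => y₁ w / y₂ w) z ≠ 0 := by
    rw [deriv_div_eq_wronskian_div_sq (ha₁ z hz).differentiableAt (ha₂ z hz).differentiableAt
      (hy₂ne z hz)]
    exact div_ne_zero (hW z hz) (pow_ne_zero 2 (hy₂ne z hz))
  have hpre : preSchwarzian (fun w => y₁ w / y₂ w) =ᶠ[𝓝 z] fun w => -2 * deriv y₂ w / y₂ w := by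
    filter_upwards [hU.mem_nhds hz] with w hw
    exact preSchwarzian_div_of_solutions hU ha₁ ha₂ hy₂ne hw (hode₁ w hw) (hode₂ w hw) (hW w hw)
  rw [schwarzian_eq_of_preSchwarzian_eventuallyEq (haf.deriv z hz).differentiableAt
    (haf.deriv.deriv z hz).differentiableAt hf₀ (ha₂ z hz).differentiableAt
    (ha₂.deriv z hz).differentiableAt (hy₂ne z hz) hpre]
  rw [div_eq_iff (hy₂ne z hz)]
  linear_combination -2 * hode₂ z hz

/-- The quotient of two independent holomorphic solutions of `y'' + p y = 0`
has Schwarzian derivative `2 p`. -/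
theorem schwarzian_quotient_of_solutions (U : Set ℂ) (hU : IsOpen U)
    (p y₁ y₂ : ℂ → ℂ)
    (hp : DifferentiableOn ℂ p U)
    (hy₁ : DifferentiableOn ℂ y₁ U) (hy₂ : DifferentiableOn ℂ y₂ U)
    (hode₁ : ∀ z ∈ U, iteratedDeriv 2 y₁ z + p z * y₁ z = 0)
    (hode₂ : ∀ z ∈ U, iteratedDeriv 2 y₂ z + p z * y₂ z = 0)
    (hy₂ne : ∀ z ∈ U, y₂ z ≠ 0)
    (hW : ∀ z ∈ U, deriv y₁ z * y₂ z - y₁ z * deriv y₂ z ≠ 0)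
    (f : ℂ → ℂ) (hf : f = fun z => y₁ z / y₂ z) :
    ∀ z ∈ U, schwarzian f z = 2 * p z :=
  schwarzian_quotient_of_solutions_general U hU p y₁ y₂ hy₁ hy₂ hode₁ hode₂ hy₂ne hW f hf
end

section
/- Let U ⊆ ℂ be a nonempty connected open set and let f : ℂ → ℂ be holomorphic and injective on U. Suppose that for every a ∈ ℂ and r > 0 such that the circle C(a, r) = {z : |z − a| = r} is contained in U, the image f(C(a, r)) is contained in some circle or some affine line of ℂ. Then f is the restriction to U of a Möbius transformation: there exist a, b, c, d ∈ ℂ with a·d − b·c ≠ 0 such that c·z + d ≠ 0 and f(z) = (a·z + b)/(c·z + d) for all z ∈ U. -/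
/-!
Pick a closed disc `D = closedBall z₀ r ⊆ U` on which `f' ≠ 0`. The image of `∂D` cannot lie
on a line `a + ℝ b`: `Im ((f - a) / b)` vanishes on `∂D`, hence on `D` by the maximum principle
applied to `exp (± i (f - a) / b)`, which forces `f` to be constant on `D`. So `f (∂D)` lies on a
circle `∂B`, and the maximum principle together with the openness of `f (D°)` shows that `f` maps
`D°` biholomorphically onto `B°`. After affine normalisation this is an automorphism of the unit
disc, which by the Schwarz lemma applied to it and to its inverse is a rotation followed by a
Blaschke factor; hence `(c z + d) f z = a z + b` on `D°`, and the identity theorem extends this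
relation to `U`.
-/

open Complex ComplexConjugate Metric Set Filter Topology

/-- A circle in `ℂ` with center `a` and radius `r`. -/
def circleSet (a : ℂ) (r : ℝ) : Set ℂ := {z : ℂ | ‖z - a‖ = r}

/-- An affine (real) line in `ℂ` through `a` with direction `b ≠ 0`. -/
def lineSet (a b : ℂ) : Set ℂ := {z : ℂ | ∃ t : ℝ, z = a + t * b}

lemma circleSet_eq_sphere (a : ℂ) (r : ℝ) : circleSet a r = sphere a r := by
  ext z
  simp [circleSet]

/-- Denominators are cleared so that the identity theorem applies; `moebius_denom_ne_zero`
recovers `c * z + d ≠ 0`. -/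
def IsMoebiusOn (f : ℂ → ℂ) (s : Set ℂ) : Prop :=
  ∃ a b c d : ℂ, a * d - b * c ≠ 0 ∧ ∀ z ∈ s, (c * z + d) * f z = a * z + b

lemma moebius_denom_ne_zero {a b c d z w : ℂ} (hdet : a * d - b * c ≠ 0)
    (h : (c * z + d) * w = a * z + b) : c * z + d ≠ 0 := by
  intro h0
  have hab : a * z + b = 0 := by rw [← h, h0, zero_mul]
  exact hdet (by linear_combination a * h0 - c * hab)

lemma IsMoebiusOn.of_mem_nhds {f : ℂ → ℂ} {U V : Set ℂ} {z₀ : ℂ} (h : IsMoebiusOn f V)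
    (hf : AnalyticOnNhd ℂ f U) (hU : IsPreconnected U) (hz₀ : z₀ ∈ U) (hV : V ∈ 𝓝 z₀) :
    IsMoebiusOn f U := by
  obtain ⟨a, b, c, d, hdet, heq⟩ := h
  refine ⟨a, b, c, d, hdet, fun z hz ↦ ?_⟩
  have hlin (p q : ℂ) : AnalyticOnNhd ℂ (fun z ↦ p * z + q) U :=
    (analyticOnNhd_const.mul analyticOnNhd_id).add analyticOnNhd_const
  exact ((hlin c d).mul hf).eqOn_of_preconnected_of_eventuallyEq (hlin a b) hU hz₀
    (eventually_of_mem hV heq) hz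

noncomputable def blaschke (a z : ℂ) : ℂ := (z - a) / (1 - conj a * z)

lemma one_sub_conj_mul_ne_zero {a z : ℂ} (ha : ‖a‖ < 1) (hz : ‖z‖ ≤ 1) : 1 - conj a * z ≠ 0 := by
  intro h
  have : ‖conj a * z‖ < 1 := by
    rw [norm_mul, norm_conj]
    nlinarith [norm_nonneg a, norm_nonneg z]
  rw [← sub_eq_zero.1 h, norm_one] at this
  exact lt_irrefl _ this

lemma norm_blaschke_lt_one {a z : ℂ} (ha : ‖a‖ < 1) (hz : ‖z‖ < 1) : ‖blaschke a z‖ < 1 := by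
  have hd := one_sub_conj_mul_ne_zero ha hz.le
  rw [blaschke, norm_div, div_lt_one (norm_pos_iff.2 hd),
    ← sq_lt_sq₀ (norm_nonneg _) (norm_nonneg _), Complex.sq_norm, Complex.sq_norm]
  have key : normSq (1 - conj a * z) - normSq (z - a) = (1 - normSq a) * (1 - normSq z) := by
    simp only [normSq_apply, sub_re, sub_im, mul_re, mul_im, one_re, one_im, conj_re, conj_im]
    ring
  have ha' : normSq a < 1 := by rw [← Complex.sq_norm]; nlinarith [norm_nonneg a]
  have hz' : normSq z < 1 := by rw [← Complex.sq_norm]; nlinarith [norm_nonneg z]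
  nlinarith

@[simp] lemma blaschke_self (a : ℂ) : blaschke a a = 0 := by simp [blaschke]

lemma blaschke_neg_blaschke {a z : ℂ} (ha : ‖a‖ < 1) (hz : ‖z‖ < 1) :
    blaschke (-a) (blaschke a z) = z := by
  have hd' := one_sub_conj_mul_ne_zero (a := -a) (by simpa using ha) (norm_blaschke_lt_one ha hz).le
  have hw : blaschke a z * (1 - conj a * z) = z - a :=
    div_mul_cancel₀ _ (one_sub_conj_mul_ne_zero ha hz.le)
  rw [blaschke, div_eq_iff hd', map_neg]
  linear_combination hw

lemma mapsTo_blaschke {a : ℂ} (ha : ‖a‖ < 1) : MapsTo (blaschke a) (ball 0 1) (ball 0 1) :=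
  fun _ hz ↦ mem_ball_zero_iff.2 (norm_blaschke_lt_one ha (mem_ball_zero_iff.1 hz))

lemma differentiableOn_blaschke {a : ℂ} (ha : ‖a‖ < 1) :
    DifferentiableOn ℂ (blaschke a) (ball 0 1) := fun _ hz ↦
  ((differentiableAt_id.sub_const a).div ((differentiableAt_id.const_mul _).const_sub 1)
    (one_sub_conj_mul_ne_zero ha (mem_ball_zero_iff.1 hz).le)).differentiableWithinAt

lemma exists_eq_mul_of_leftInvOn_unitBall {F G : ℂ → ℂ} (hF : DifferentiableOn ℂ F (ball 0 1))
    (hG : DifferentiableOn ℂ G (ball 0 1)) (hFm : MapsTo F (ball 0 1) (ball 0 1))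
    (hGm : MapsTo G (ball 0 1) (ball 0 1)) (hF0 : F 0 = 0) (hGF : LeftInvOn G F (ball 0 1)) :
    ∃ C : ℂ, ‖C‖ = 1 ∧ ∀ z ∈ ball (0 : ℂ) 1, F z = C * z := by
  have h0 : (0 : ℂ) ∈ ball (0 : ℂ) 1 := mem_ball_self one_pos
  have hG0 : G 0 = 0 := by simpa [hF0] using hGF h0
  have hchain : deriv G 0 * deriv F 0 = 1 := by
    have hid : G ∘ F =ᶠ[𝓝 0] id := eventually_of_mem (isOpen_ball.mem_nhds h0) hGF
    have hGd : DifferentiableAt ℂ G (F 0) := by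
      rw [hF0]; exact hG.differentiableAt (isOpen_ball.mem_nhds h0)
    have h := deriv_comp (0 : ℂ) hGd (hF.differentiableAt (isOpen_ball.mem_nhds h0))
    rwa [hid.deriv_eq, deriv_id, hF0, eq_comm] at h
  have hF1 : ‖deriv F 0‖ ≤ 1 := by
    simpa using norm_deriv_le_one_of_mapsTo_ball hF
      (by simpa [hF0] using hFm.mono_right ball_subset_closedBall) one_pos
  have hG1 : ‖deriv G 0‖ ≤ 1 := by
    simpa using norm_deriv_le_one_of_mapsTo_ball hG
      (by simpa [hG0] using hGm.mono_right ball_subset_closedBall) one_pos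
  have hnorm : ‖deriv F 0‖ = 1 := by
    have : ‖deriv G 0‖ * ‖deriv F 0‖ = 1 := by rw [← norm_mul, hchain, norm_one]
    nlinarith [norm_nonneg (deriv G 0), norm_nonneg (deriv F 0)]
  obtain ⟨C, hC, hFC⟩ := affine_of_mapsTo_ball_of_exists_norm_dslope_eq_div' hF
    (by simpa [hF0] using hFm.mono_right ball_subset_closedBall) ⟨0, h0, by simpa using hnorm⟩
  exact ⟨C, by simpa using hC, fun z hz ↦ by simpa [hF0, mul_comm] using hFC hz⟩

lemma exists_eq_blaschke_of_leftInvOn_unitBall {F G : ℂ → ℂ}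
    (hF : DifferentiableOn ℂ F (ball 0 1)) (hG : DifferentiableOn ℂ G (ball 0 1))
    (hFm : MapsTo F (ball 0 1) (ball 0 1)) (hGm : MapsTo G (ball 0 1) (ball 0 1))
    (hGF : LeftInvOn G F (ball 0 1)) :
    ∃ C : ℂ, ‖C‖ = 1 ∧ ∀ z ∈ ball (0 : ℂ) 1, F z = blaschke (-F 0) (C * z) := by
  have hw : ‖F 0‖ < 1 := mem_ball_zero_iff.1 (hFm (mem_ball_self one_pos))
  have hw' : ‖-F 0‖ < 1 := by rwa [norm_neg]
  obtain ⟨C, hC, hFC⟩ := exists_eq_mul_of_leftInvOn_unitBall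
    ((differentiableOn_blaschke hw).comp hF hFm) (hG.comp (differentiableOn_blaschke hw')
      (mapsTo_blaschke hw')) ((mapsTo_blaschke hw).comp hFm)
    (hGm.comp (mapsTo_blaschke hw')) (blaschke_self _)
    fun z hz ↦ by
      simp only [Function.comp_apply, blaschke_neg_blaschke hw (mem_ball_zero_iff.1 (hFm hz)),
        hGF hz]
  refine ⟨C, hC, fun z hz ↦ ?_⟩
  rw [← hFC z hz, Function.comp_apply, blaschke_neg_blaschke hw (mem_ball_zero_iff.1 (hFm hz))]

lemma div_mem_unitBall {z₀ z : ℂ} {r : ℝ} (hr : 0 < r) :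
    (z - z₀) / r ∈ ball (0 : ℂ) 1 ↔ z ∈ ball z₀ r := by
  rw [mem_ball_zero_iff, norm_div, norm_real, Real.norm_of_nonneg hr.le, div_lt_one hr,
    mem_ball_iff_norm]

lemma isMoebiusOn_of_eqOn_blaschke {f : ℂ → ℂ} {z₀ a w C : ℂ} {r r' : ℝ} (hr : 0 < r)
    (hr' : r' ≠ 0) (hw : ‖w‖ < 1) (hC : ‖C‖ = 1)
    (hf : ∀ z ∈ ball z₀ r, f z = a + r' * blaschke (-w) (C * ((z - z₀) / r))) :
    IsMoebiusOn f (ball z₀ r) := by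
  have hr0 : (r : ℂ) ≠ 0 := ofReal_ne_zero.2 hr.ne'
  have hC0 : C ≠ 0 := norm_ne_zero_iff.1 (by simp [hC])
  -- clear the denominator `r * (1 + conj w * v)` of `a + r' * (v + w) / (1 + conj w * v)`,
  -- where `v = C * ((z - z₀) / r)`
  refine ⟨a * conj w * C + r' * C, a * (r - conj w * C * z₀) + r' * (r * w - C * z₀),
    conj w * C, r - conj w * C * z₀, ?_, fun z hz ↦ ?_⟩
  · have hww : 1 - conj w * w ≠ 0 := one_sub_conj_mul_ne_zero hw hw.le
    have : (a * conj w * C + r' * C) * (r - conj w * C * z₀) -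
        (a * (r - conj w * C * z₀) + r' * (r * w - C * z₀)) * (conj w * C) =
        r' * C * r * (1 - conj w * w) := by ring
    rw [this]
    exact mul_ne_zero (mul_ne_zero (mul_ne_zero (ofReal_ne_zero.2 hr') hC0) hr0) hww
  · set v := C * ((z - z₀) / r)
    have hv : ‖v‖ ≤ 1 := by
      rw [norm_mul, hC, one_mul]; exact (mem_ball_zero_iff.1 ((div_mem_unitBall hr).2 hz)).le
    have hvr : v * r = C * (z - z₀) := by simp only [v]; field_simp
    have hb : blaschke (-w) v * (1 + conj w * v) = v + w := by
      have := div_mul_cancel₀ (v + w) (one_sub_conj_mul_ne_zero (a := -w) (by rwa [norm_neg]) hv)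
      simpa [blaschke] using this
    rw [hf z hz]
    linear_combination (r' - conj w * r' * blaschke (-w) v) * hvr + r * r' * hb

lemma isMoebiusOn_ball_of_leftInvOn {f g : ℂ → ℂ} {z₀ a : ℂ} {r r' : ℝ} (hr : 0 < r)
    (hr' : 0 < r') (hf : DifferentiableOn ℂ f (ball z₀ r)) (hg : DifferentiableOn ℂ g (ball a r'))
    (hfm : MapsTo f (ball z₀ r) (ball a r')) (hgm : MapsTo g (ball a r') (ball z₀ r))
    (hgf : LeftInvOn g f (ball z₀ r)) : IsMoebiusOn f (ball z₀ r) := by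
  have hr0 : (r : ℂ) ≠ 0 := ofReal_ne_zero.2 hr.ne'
  have hr0' : (r' : ℂ) ≠ 0 := ofReal_ne_zero.2 hr'.ne'
  have hsrc : MapsTo (fun u : ℂ ↦ z₀ + r * u) (ball 0 1) (ball z₀ r) := fun u hu ↦ by
    rw [← div_mem_unitBall hr]; simpa [hr0] using hu
  have htgt : MapsTo (fun v : ℂ ↦ a + r' * v) (ball 0 1) (ball a r') := fun v hv ↦ by
    rw [← div_mem_unitBall hr']; simpa [hr0'] using hv
  set F : ℂ → ℂ := fun u ↦ (f (z₀ + r * u) - a) / r'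
  set G : ℂ → ℂ := fun v ↦ (g (a + r' * v) - z₀) / r
  have hF : DifferentiableOn ℂ F (ball 0 1) :=
    ((hf.comp (by fun_prop) hsrc).sub_const a).div_const _
  have hG : DifferentiableOn ℂ G (ball 0 1) :=
    ((hg.comp (by fun_prop) htgt).sub_const z₀).div_const _
  have hFm : MapsTo F (ball 0 1) (ball 0 1) := fun u hu ↦ (div_mem_unitBall hr').2 (hfm (hsrc hu))
  have hGm : MapsTo G (ball 0 1) (ball 0 1) := fun v hv ↦ (div_mem_unitBall hr).2 (hgm (htgt hv))
  have hGF : LeftInvOn G F (ball 0 1) := fun u hu ↦ by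
    simp only [F, G, mul_div_cancel₀ _ hr0', add_sub_cancel, hgf (hsrc hu), add_sub_cancel_left,
      mul_div_cancel_left₀ _ hr0]
  obtain ⟨C, hC, hFC⟩ := exists_eq_blaschke_of_leftInvOn_unitBall hF hG hFm hGm hGF
  refine isMoebiusOn_of_eqOn_blaschke (a := a) hr hr'.ne'
    (mem_ball_zero_iff.1 (hFm (mem_ball_self one_pos))) hC fun z hz ↦ ?_
  have := hFC _ ((div_mem_unitBall hr).2 hz)
  simp only [F, mul_div_cancel₀ _ hr0, add_sub_cancel] at this
  rw [← this]
  field_simp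
  ring

lemma isOpen_image_of_deriv_ne_zero {f : ℂ → ℂ} {s : Set ℂ} (hs : IsOpen s)
    (hf : DifferentiableOn ℂ f s) (hf' : ∀ z ∈ s, deriv f z ≠ 0) : IsOpen (f '' s) := by
  refine isOpen_iff_mem_nhds.2 ?_
  rintro _ ⟨z, hz, rfl⟩
  rw [← (hf.analyticAt (hs.mem_nhds hz)).hasStrictDerivAt.map_nhds_eq (hf' z hz)]
  exact image_mem_map (hs.mem_nhds hz)

lemma differentiableOn_invFunOn_image {f : ℂ → ℂ} {s : Set ℂ} (hs : IsOpen s)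
    (hf : DifferentiableOn ℂ f s) (hf' : ∀ z ∈ s, deriv f z ≠ 0) (hinj : InjOn f s) :
    DifferentiableOn ℂ (Function.invFunOn f s) (f '' s) := by
  rintro _ ⟨z, hz, rfl⟩
  have hleft : ∀ᶠ x in 𝓝 z, Function.invFunOn f s (f x) = x :=
    eventually_of_mem (hs.mem_nhds hz) hinj.leftInvOn_invFunOn
  exact ((hf.analyticAt (hs.mem_nhds hz)).hasStrictDerivAt.to_local_left_inverse (hf' z hz)
    hleft).hasDerivAt.differentiableAt.differentiableWithinAt

lemma mapsTo_ball_of_mapsTo_sphere {f : ℂ → ℂ} {z₀ a : ℂ} {r r' : ℝ} (hr' : r' ≠ 0)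
    (hf : DifferentiableOn ℂ f (closedBall z₀ r)) (hopen : IsOpen (f '' ball z₀ r))
    (hsph : MapsTo f (sphere z₀ r) (sphere a r')) : MapsTo f (ball z₀ r) (ball a r') := by
  have hle : MapsTo f (ball z₀ r) (closedBall a r') := fun z hz ↦ by
    rw [mem_closedBall_iff_norm]
    refine norm_le_of_forall_mem_frontier_norm_le isBounded_ball
      ((hf.sub_const a).diffContOnCl_ball subset_rfl) (fun w hw ↦ ?_) (subset_closure hz)
    exact (mem_sphere_iff_norm.1 (hsph (frontier_ball_subset_sphere hw))).le
  rw [← interior_closedBall a hr', mapsTo_iff_image_subset]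
  exact interior_maximal hle.image_subset hopen

lemma ball_subset_image_of_mapsTo_sphere {f : ℂ → ℂ} {z₀ a : ℂ} {r r' : ℝ}
    (hf : ContinuousOn f (closedBall z₀ r)) (hopen : IsOpen (f '' ball z₀ r))
    (hsph : MapsTo f (sphere z₀ r) (sphere a r')) (hr : 0 < r) (h₀ : f z₀ ∈ ball a r') :
    ball a r' ⊆ f '' ball z₀ r := by
  refine (convex_ball a r').isPreconnected.subset_of_closure_inter_subset hopen
    ⟨f z₀, h₀, mem_image_of_mem f (mem_ball_self hr)⟩ ?_
  rintro _ ⟨hw, hwa⟩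
  have hcl : closure (f '' ball z₀ r) ⊆ f '' closedBall z₀ r :=
    closure_minimal (image_mono ball_subset_closedBall)
      ((isCompact_closedBall z₀ r).image_of_continuousOn hf).isClosed
  obtain ⟨z, hz, rfl⟩ := hcl hw
  by_cases hzb : z ∈ ball z₀ r
  · exact mem_image_of_mem f hzb
  · have : z ∈ sphere z₀ r := mem_sphere.2 (le_antisymm hz (not_lt.1 hzb))
    exact absurd (mem_sphere.1 (hsph this)) (mem_ball.1 hwa).ne

lemma isMoebiusOn_ball_of_mapsTo_sphere {f : ℂ → ℂ} {z₀ a : ℂ} {r r' : ℝ} (hr : 0 < r)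
    (hr' : 0 < r') (hf : DifferentiableOn ℂ f (closedBall z₀ r))
    (hf' : ∀ z ∈ ball z₀ r, deriv f z ≠ 0) (hinj : InjOn f (ball z₀ r))
    (hsph : MapsTo f (sphere z₀ r) (sphere a r')) : IsMoebiusOn f (ball z₀ r) := by
  have hfb : DifferentiableOn ℂ f (ball z₀ r) := hf.mono ball_subset_closedBall
  have hopen := isOpen_image_of_deriv_ne_zero isOpen_ball hfb hf'
  have hmaps := mapsTo_ball_of_mapsTo_sphere hr'.ne' hf hopen hsph
  have himage : f '' ball z₀ r = ball a r' := (mapsTo_iff_image_subset.1 hmaps).antisymm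
    (ball_subset_image_of_mapsTo_sphere hf.continuousOn hopen hsph hr (hmaps (mem_ball_self hr)))
  have hg := differentiableOn_invFunOn_image isOpen_ball hfb hf' hinj
  rw [himage] at hg
  refine isMoebiusOn_ball_of_leftInvOn hr hr' hfb hg hmaps (fun w hw ↦ ?_)
    hinj.leftInvOn_invFunOn
  rw [← himage] at hw
  exact Function.invFunOn_mem hw

lemma re_le_of_forall_mem_frontier_re_le {E : Type*} [NormedAddCommGroup E] [NormedSpace ℂ E]
    [Nontrivial E] {g : E → ℂ} {U : Set E} {C : ℝ} (hU : Bornology.IsBounded U)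
    (hg : DiffContOnCl ℂ g U) (hC : ∀ z ∈ frontier U, (g z).re ≤ C) {z : E}
    (hz : z ∈ closure U) : (g z).re ≤ C := by
  have hexp : DiffContOnCl ℂ (fun z ↦ exp (g z)) U :=
    ⟨hg.differentiableOn.cexp, hg.continuousOn.cexp⟩
  rw [← Real.exp_le_exp, ← norm_exp]
  exact norm_le_of_forall_mem_frontier_norm_le hU hexp
    (fun w hw ↦ by rw [norm_exp, Real.exp_le_exp]; exact hC w hw) hz

lemma not_mapsTo_sphere_lineSet {f : ℂ → ℂ} {z₀ a b : ℂ} {r : ℝ} (hr : 0 < r)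
    (hf : DifferentiableOn ℂ f (closedBall z₀ r)) (hinj : InjOn f (ball z₀ r)) (hb : b ≠ 0) :
    ¬MapsTo f (sphere z₀ r) (lineSet a b) := by
  intro hline
  set h : ℂ → ℂ := fun z ↦ (f z - a) / b
  have hh : DifferentiableOn ℂ h (closedBall z₀ r) := (hf.sub_const a).div_const b
  have hsph : ∀ z ∈ sphere z₀ r, (h z).im = 0 := fun z hz ↦ by
    obtain ⟨t, ht⟩ := hline hz
    simp [h, ht, hb]
  have him : ∀ z ∈ ball z₀ r, (h z).im = 0 := fun z hz ↦ by
    have bound (s : ℝ) : (s * I * h z).re ≤ 0 :=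
      re_le_of_forall_mem_frontier_re_le isBounded_ball
        ((hh.const_mul (s * I)).diffContOnCl_ball subset_rfl)
        (fun w hw ↦ by simp [hsph w (frontier_ball_subset_sphere hw)]) (subset_closure hz)
    have h₁ := bound 1
    have h₂ := bound (-1)
    simp only [ofReal_one, one_mul, ofReal_neg, neg_mul, neg_re, mul_re, I_re, I_im, zero_mul,
      zero_sub, neg_neg] at h₁ h₂
    linarith
  obtain ⟨c, hc⟩ := ((hh.mono ball_subset_closedBall).analyticOnNhd isOpen_ball)
    |>.eq_const_of_im_eq_const him isOpen_ball (isConnected_ball hr)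
  obtain ⟨x, hx, y, hy, hxy⟩ := (infinite_of_mem_nhds z₀ (ball_mem_nhds z₀ hr)).nontrivial
  refine hxy (hinj hx hy ?_)
  simpa [h, hb] using (hc x hx).trans (hc y hy).symm

lemma exists_deriv_ne_zero_of_injOn {𝕜 G : Type*} [RCLike 𝕜] [NormedAddCommGroup G]
    [NormedSpace 𝕜 G] {f : 𝕜 → G} {s : Set 𝕜} (hs : IsOpen s) (hs' : IsPreconnected s)
    (hf : DifferentiableOn 𝕜 f s) (hinj : InjOn f s) (hnt : s.Nontrivial) :
    ∃ z ∈ s, deriv f z ≠ 0 := by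
  by_contra! h
  obtain ⟨x, hx, y, hy, hxy⟩ := hnt
  exact hxy (hinj hx hy (hs.is_const_of_deriv_eq_zero hs' hf h hx hy))

lemma exists_closedBall_subset_deriv_ne_zero {f : ℂ → ℂ} {U : Set ℂ} {z : ℂ} (hU : IsOpen U)
    (hf : DifferentiableOn ℂ f U) (hz : z ∈ U) (hz' : deriv f z ≠ 0) :
    ∃ r > 0, closedBall z r ⊆ U ∧ ∀ w ∈ closedBall z r, deriv f w ≠ 0 := by
  have hev : ∀ᶠ w in 𝓝 z, w ∈ U ∧ deriv f w ≠ 0 :=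
    Filter.Eventually.and (hU.mem_nhds hz)
      (((hf.analyticOnNhd hU).deriv z hz).continuousAt.eventually_ne hz')
  obtain ⟨r, hr, hsub⟩ := nhds_basis_closedBall.eventually_iff.1 hev
  exact ⟨r, hr, fun w hw ↦ (hsub hw).1, fun w hw ↦ (hsub hw).2⟩

/-- An injective holomorphic map on a nonempty connected open set that sends every
circle contained in its domain into a circle or an affine line is the restriction
of a Möbius transformation. -/
theorem moebius_of_maps_circles_to_circles_or_lines
    (U : Set ℂ) (hU : IsOpen U) (hUc : IsConnected U) (hUne : U.Nonempty)
    (f : ℂ → ℂ) (hf : DifferentiableOn ℂ f U) (hinj : Set.InjOn f U)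
    (hcirc : ∀ (a : ℂ) (r : ℝ), 0 < r → circleSet a r ⊆ U →
      (∃ a' : ℂ, ∃ r' : ℝ, 0 < r' ∧ f '' circleSet a r ⊆ circleSet a' r') ∨
      (∃ a' b' : ℂ, b' ≠ 0 ∧ f '' circleSet a r ⊆ lineSet a' b')) :
    ∃ a b c d : ℂ, a * d - b * c ≠ 0 ∧
      ∀ z ∈ U, c * z + d ≠ 0 ∧ f z = (a * z + b) / (c * z + d) := by
  obtain ⟨z₀, hz₀, hz₀'⟩ := exists_deriv_ne_zero_of_injOn hU hUc.isPreconnected hf hinj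
    (infinite_of_mem_nhds _ (hU.mem_nhds hUne.some_mem)).nontrivial
  obtain ⟨r, hr, hball, hder⟩ := exists_closedBall_subset_deriv_ne_zero hU hf hz₀ hz₀'
  have hfr : DifferentiableOn ℂ f (closedBall z₀ r) := hf.mono hball
  have hinjr : InjOn f (ball z₀ r) := hinj.mono (ball_subset_closedBall.trans hball)
  have hsph : circleSet z₀ r ⊆ U := circleSet_eq_sphere z₀ r ▸ sphere_subset_closedBall.trans hball
  have hmoeb : IsMoebiusOn f (ball z₀ r) := by
    rcases hcirc z₀ r hr hsph with ⟨a, r', hr', him⟩ | ⟨a, b, hb, him⟩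
    · rw [circleSet_eq_sphere, circleSet_eq_sphere, ← mapsTo_iff_image_subset] at him
      exact isMoebiusOn_ball_of_mapsTo_sphere hr hr' hfr
        (fun z hz ↦ hder z (ball_subset_closedBall hz)) hinjr him
    · rw [circleSet_eq_sphere, ← mapsTo_iff_image_subset] at him
      exact absurd him (not_mapsTo_sphere_lineSet hr hfr hinjr hb)
  obtain ⟨a, b, c, d, hdet, heq⟩ := hmoeb.of_mem_nhds (hf.analyticOnNhd hU) hUc.isPreconnected hz₀
    (ball_mem_nhds z₀ hr)
  refine ⟨a, b, c, d, hdet, fun z hz ↦ ?_⟩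
  have hden := moebius_denom_ne_zero hdet (heq z hz)
  exact ⟨hden, eq_div_of_mul_eq hden ((mul_comm _ _).trans (heq z hz))⟩
end

section
/- Let S² be the unit sphere centered at 0 in EuclideanSpace ℝ (Fin 3), regarded as a smooth manifold, and let v ∈ S². Then the stereographic projection from the pole v is conformal at every point x ∈ S² with x ≠ v: its manifold differential (mfderiv) at x, as a linear map from the tangent space of S² at x to the model Euclidean plane, is a nonzero scalar multiple of a linear isometry. -/
/-!
Up to constant factors, both the stereographic projection from `v` and the inverse of the chart
at `x` (the stereographic projection from `-x`, followed by a linear isometry onto `ℝⁿ`) are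
restrictions of the inversion in the sphere of radius `√2` about the respective pole. The
derivative of an inversion is a multiple of a reflection, so in the chart at `x` the
stereographic projection is a composite of maps with conformal derivatives.
-/

open Metric Manifold Submodule EuclideanGeometry Module
open scoped RealInnerProductSpace

theorem mfderiv_eq_fderiv_comp_chartAt_symm {𝕜 X F M : Type*} [NontriviallyNormedField 𝕜]
    [NormedAddCommGroup X] [NormedSpace 𝕜 X] [NormedAddCommGroup F] [NormedSpace 𝕜 F]
    [TopologicalSpace M] [ChartedSpace X M] {f : M → F} {x : M} (hf : ContinuousAt f x)
    (hd : DifferentiableAt 𝕜 (f ∘ (chartAt X x).symm) (chartAt X x x)) :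
    mfderiv 𝓘(𝕜, X) 𝓘(𝕜, F) f x = fderiv 𝕜 (f ∘ (chartAt X x).symm) (chartAt X x x) := by
  refine HasMFDerivAt.mfderiv ⟨hf, ?_⟩
  simp only [writtenInExtChartAt, extChartAt, chartAt_self_eq, mfld_simps]
  exact hd.hasFDerivAt.hasFDerivWithinAt

section
variable {E : Type*} [NormedAddCommGroup E] [InnerProductSpace ℝ E] {v : E}

theorem conformalAt_inversion {c x : E} {R : ℝ} (hR : R ≠ 0) (hx : x ≠ c) :
    ConformalAt (inversion c R) x :=
  ⟨_, hasFDerivAt_inversion hx,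
    (ℝ ∙ (x - c))ᗮ.reflection.toLinearIsometry.isConformalMap.smul
      (pow_ne_zero 2 (div_ne_zero hR (dist_ne_zero.2 hx)))⟩

theorem ConformalAt.of_coe_submodule {X : Type*} [NormedAddCommGroup X] [InnerProductSpace ℝ X]
    {K : Submodule ℝ E} [K.HasOrthogonalProjection] {f : X → K} {x : X}
    (hf : ConformalAt (fun z => (f z : E)) x) : ConformalAt f x := by
  obtain ⟨f', hf', hconf⟩ := hf
  have hderiv : HasFDerivAt f (K.orthogonalProjectionOnto ∘L f') x := by
    simpa [Function.comp_def] using K.orthogonalProjectionOnto.hasFDerivAt.comp x hf'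
  have hcoe : K.subtypeL ∘L K.orthogonalProjectionOnto ∘L f' = f' :=
    (K.subtypeL.hasFDerivAt.comp x hderiv).unique hf'
  refine ⟨_, hderiv, ?_⟩
  rw [isConformalMap_iff] at hconf ⊢
  obtain ⟨c, hc, hinner⟩ := hconf
  refine ⟨c, hc, fun u u' => ?_⟩
  have hinner_uu' := hinner u u'
  rw [← hcoe] at hinner_uu'
  exact hinner_uu'

theorem stereoInvFunAux_eq_inversion (hv : ‖v‖ = 1) {w : E} (hw : w ∈ (ℝ ∙ v)ᗮ) :
    stereoInvFunAux v w = inversion v (√2) ((2 : ℝ)⁻¹ • w) := by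
  have hwv : ⟪w, v⟫ = 0 := mem_orthogonal_singleton_iff_inner_left.mp hw
  have hdist : dist ((2 : ℝ)⁻¹ • w) v ^ 2 = (‖w‖ ^ 2 + 4) / 4 := by
    rw [dist_eq_norm, norm_sub_sq_real, norm_smul, real_inner_smul_left, hwv, hv]
    norm_num
    ring
  rw [inversion, div_pow, Real.sq_sqrt zero_le_two, hdist, stereoInvFunAux_apply,
    vsub_eq_sub, vadd_eq_add]
  match_scalars
  · field_simp
  · field_simp
    ring

theorem coe_stereoToFun_eq_inversion (hv : ‖v‖ = 1) {y : E} (hy : ‖y‖ = 1) (hyv : y ≠ v) :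
    (stereoToFun v y : E) = (2 : ℝ) • inversion v (√2) y := by
  have hlt : ⟪v, y⟫ < 1 := (inner_lt_one_iff_real_of_norm_eq_one hv hy).2 hyv.symm
  have hproj : ((ℝ ∙ v)ᗮ.orthogonalProjectionOnto y : E) = y - ⟪v, y⟫ • v := by
    rw [eq_sub_iff_add_eq', ← starProjection_unit_singleton ℝ hv y]
    exact starProjection_add_starProjection_orthogonal y
  have hdist : dist y v ^ 2 = 2 * (1 - ⟪v, y⟫) := by
    rw [dist_eq_norm, norm_sub_sq_real, hy, hv, real_inner_comm]
    ring
  rw [stereoToFun_apply, coe_smul, hproj, inversion, div_pow, Real.sq_sqrt zero_le_two, hdist,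
    vsub_eq_sub, vadd_eq_add, innerSL_apply_apply]
  have : 1 - ⟪v, y⟫ ≠ 0 := by linarith
  match_scalars
  · field_simp
  · field_simp
    ring

theorem conformalAt_coe_stereographic'_symm {n : ℕ} [Fact (finrank ℝ E = n + 1)]
    (v : sphere (0 : E) 1) (z : EuclideanSpace ℝ (Fin n)) :
    ConformalAt (fun z => ((stereographic' n v).symm z : E)) z := by
  set U :=
    (OrthonormalBasis.fromOrthogonalSpanSingleton (𝕜 := ℝ) n (ne_zero_of_mem_unit_sphere v)).repr
  set L : EuclideanSpace ℝ (Fin n) →L[ℝ] E :=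
    (2 : ℝ)⁻¹ • (ℝ ∙ (v : E))ᗮ.subtypeL ∘L U.symm.toContinuousLinearEquiv.toContinuousLinearMap
  have hL : IsConformalMap L :=
    ((ℝ ∙ (v : E))ᗮ.subtypeₗᵢ.comp U.symm.toLinearIsometry).isConformalMap.smul (by norm_num)
  have hchart : (fun z => ((stereographic' n v).symm z : E)) = inversion (v : E) (√2) ∘ L := by
    ext1 z
    change _ = inversion (v : E) (√2) ((2 : ℝ)⁻¹ • (U.symm z : E))
    rw [← stereoInvFunAux_eq_inversion (norm_eq_of_mem_sphere v) (U.symm z).2,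
      stereographic'_symm_apply, stereoInvFunAux_apply, smul_add]
  have hLv : L z ≠ v := by
    intro h
    have hmem : L z ∈ (ℝ ∙ (v : E))ᗮ := smul_mem _ _ (U.symm z).2
    rw [h, mem_orthogonal_singleton_iff_inner_right, inner_self_eq_zero] at hmem
    exact ne_zero_of_mem_unit_sphere v hmem
  rw [hchart]
  exact (conformalAt_inversion (by norm_num) hLv).comp z ⟨L, L.hasFDerivAt, hL⟩

theorem isConformalMap_mfderiv_stereographic' {n : ℕ} [Fact (finrank ℝ E = n + 1)]
    (hv : ‖v‖ = 1) {x : sphere (0 : E) 1} (hx : (x : E) ≠ v) :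
    IsConformalMap (X := EuclideanSpace ℝ (Fin n)) (Y := (ℝ ∙ v)ᗮ)
      (mfderiv (𝓡 n) 𝓘(ℝ, (ℝ ∙ v)ᗮ) (stereographic hv) x) := by
  set φ := chartAt (EuclideanSpace ℝ (Fin n)) x
  have hφ : ∀ z, ConformalAt (fun z => (φ.symm z : E)) z :=
    conformalAt_coe_stereographic'_symm (-x)
  have hφx : (φ.symm (φ x) : E) = x := congrArg _ (φ.left_inv (mem_chart_source _ x))
  have hφcont : Continuous fun z => (φ.symm z : E) :=
    continuous_iff_continuousAt.2 fun z => (hφ z).differentiableAt.continuousAt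
  have hconf : ConformalAt (stereographic hv ∘ φ.symm) (φ x) := by
    have hinv : ConformalAt ((2 : ℝ) • inversion v (√2)) (φ.symm (φ x) : E) :=
      (conformalAt_inversion (by positivity) (by rwa [hφx])).const_smul two_ne_zero
    refine ConformalAt.of_coe_submodule <| (hinv.comp (φ x) (hφ (φ x))).congr
      (u := {z | (φ.symm z : E) ≠ v}) (by rwa [Set.mem_ofPred, hφx])
      (isOpen_ne_fun hφcont continuous_const) fun z hz => ?_
    exact coe_stereoToFun_eq_inversion hv (norm_eq_of_mem_sphere _) hz
  have hcont : ContinuousAt (stereographic hv) x :=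
    (stereographic hv).continuousAt (by simpa [Subtype.ext_iff] using hx)
  rw [mfderiv_eq_fderiv_comp_chartAt_symm hcont hconf.differentiableAt]
  exact conformalAt_iff_isConformalMap_fderiv.mp hconf

end

/-- The stereographic projection from a pole `v` of the unit sphere in `ℝ³` is
conformal at every point `x ≠ v`: its manifold differential is a (nonzero) conformal
linear map from the tangent space to the sphere at `x` to the plane `(ℝ ∙ v)ᗮ`. -/
theorem isConformalMap_mfderiv_stereographic
    (v x : sphere (0 : EuclideanSpace ℝ (Fin 3)) 1) (hx : x ≠ v) :
    IsConformalMap (X := EuclideanSpace ℝ (Fin 2))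
      (Y := (ℝ ∙ (v : EuclideanSpace ℝ (Fin 3)))ᗮ)
      (mfderiv (𝓡 2) 𝓘(ℝ, (ℝ ∙ (v : EuclideanSpace ℝ (Fin 3)))ᗮ)
        (stereographic (norm_eq_of_mem_sphere v)) x) :=
  have : Fact (finrank ℝ (EuclideanSpace ℝ (Fin 3)) = 2 + 1) := ⟨finrank_euclideanSpace_fin⟩
  isConformalMap_mfderiv_stereographic' _ (Subtype.coe_injective.ne hx)
end
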